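/- Let (U_n)_{n≥0} be a SVLMC defined by a probabilized context tree (T,(q_c)_{c∈C}) and let π be any stationary probability measure on L. Then for every finite word w over A and every letter α ∈ A, π(wα) = π(w)·q_{pref(w)}(α). -/

import Mathlib

open MeasureTheory
open ProbabilityTheory (Kernel IsMarkovKernel)
open scoped ENNReal

namespace VLMC

/-- Left-infinite sequences over the alphabet `{0,1}`; `s 0` is the rightmost
(most recent) letter, `s 1` the one before it, etc. -/
abbrev L : Type := ℕ → Bool

/-- Append the letter `b` on the right of the left-infinite sequence `s`. -/
def extend (b : Bool) (s : L) : L := fun n => match n with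
  | 0 => b
  | k + 1 => s k

/-- Sequences whose letters, read from the rightmost one leftwards, start with `u`. -/
def cylRev (u : List Bool) : Set L := {s | ∀ i < u.length, s i = u.getD i false}

/-- The cylinder `Lw` of left-infinite sequences admitting the finite word `w` as a suffix. -/
def cyl (w : List Bool) : Set L := cylRev w.reverse

/-- A (saturated) context tree: a prefix-closed set of finite words containing the
empty word, in which every node having one child has both children. A node
`[α₁, …, α_N]` corresponds to the word `α₁…α_N`, matched against a left-infinite
sequence `s` via `s 0 = α₁, …, s (N-1) = α_N`. -/
def IsContextTree (T : List Bool → Prop) : Prop :=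
  T [] ∧ (∀ u b, T (u ++ [b]) → T u) ∧ (∀ u b, T (u ++ [b]) → T (u ++ [!b]))

/-- Finite leaves (finite contexts) of a context tree. -/
def IsLeaf (T : List Bool → Prop) (c : List Bool) : Prop :=
  T c ∧ ∀ b, ¬ T (c ++ [b])

/-- Infinite leaves (infinite contexts), seen as the left-infinite sequences they match. -/
def IsInfLeaf (T : List Bool → Prop) (s : L) : Prop :=
  ∀ n, T (List.ofFn fun i : Fin n => s i)

/-- `κ` is the transition kernel of the VLMC associated with the probabilized
context tree `(T, qF, qI)` : from a state `s` whose context is the finite leaf `c`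
(resp. an infinite leaf), a letter `α` is appended on the right with probability
`qF c α` (resp. `qI s α`). -/
def IsVLMCKernel (T : List Bool → Prop) (qF : List Bool → Bool → ℝ≥0∞)
    (qI : L → Bool → ℝ≥0∞) (κ : Kernel L L) : Prop :=
  (∀ c, IsLeaf T c → ∀ s ∈ cylRev c,
      κ s = qF c false • Measure.dirac (extend false s)
          + qF c true • Measure.dirac (extend true s)) ∧
  (∀ s, IsInfLeaf T s →
      κ s = qI s false • Measure.dirac (extend false s)
          + qI s true • Measure.dirac (extend true s))

/-- `π` is a stationary (invariant) probability measure for the kernel `κ`. -/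
def IsStationary (κ : Kernel L L) (π : Measure L) : Prop :=
  ∀ B : Set L, MeasurableSet B → π B = ∫⁻ s, κ s B ∂π


/-
By stationarity `π(wα) = ∫ κ(s, Lwα) dπ(s)`. A transition appends one letter, so it enters `Lwα`
only from `Lw`; this applies to every state, since each one lies in the cylinder of a finite
context or is an infinite context. Hence the integral runs over `Lw` alone. When `c̄` is a suffix
of `w` for a finite context `c`, every state of `Lw` has context `c` and the integrand is `q_c(α)`;
at an internal node with `π(w) = 0` the integral vanishes.
-/

lemma measurableSet_cylRev (u : List Bool) : MeasurableSet (cylRev u) := by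
  have : cylRev u = ⋂ i ∈ Set.Iio u.length, (fun s : L => s i) ⁻¹' {u.getD i false} := by
    ext s; simp [cylRev]
  rw [this]
  exact .biInter (Set.to_countable _) fun i _ => measurable_pi_apply i (.singleton _)

lemma measurableSet_cyl (w : List Bool) : MeasurableSet (cyl w) :=
  measurableSet_cylRev _

lemma cylRev_subset_of_prefix {c u : List Bool} (h : c <+: u) : cylRev u ⊆ cylRev c := by
  obtain ⟨t, rfl⟩ := h
  intro s hs i hi
  rw [hs i (by simp; omega), List.getD_eq_getElem _ _ (by simp; omega),
    List.getD_eq_getElem _ _ hi]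
  exact List.getElem_append_left hi

lemma extend_mem_cyl_append_iff {w : List Bool} {b α : Bool} {s : L} :
    extend α s ∈ cyl (w ++ [b]) ↔ α = b ∧ s ∈ cyl w := by
  simp only [cyl, cylRev, List.reverse_append, List.reverse_singleton, List.singleton_append,
    List.length_cons, Set.mem_ofPred_eq]
  constructor
  · intro h
    exact ⟨by simpa [extend] using h 0 (by simp),
      fun i hi => by simpa [extend] using h (i + 1) (by omega)⟩
  · rintro ⟨rfl, hs⟩ (_ | i) hi
    · simp [extend]
    · simpa [extend] using hs i (by omega)

lemma mem_cylRev_ofFn (s : L) (n : ℕ) : s ∈ cylRev (List.ofFn fun i : Fin n => s i) := by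
  intro i hi
  rw [List.getD_eq_getElem _ _ hi]
  simp

namespace IsContextTree

variable {T : List Bool → Prop}

lemma sibling (hT : IsContextTree T) {u : List Bool} {b : Bool} (h : T (u ++ [b]))
    (b' : Bool) : T (u ++ [b']) := by
  obtain rfl | rfl : b' = b ∨ b' = !b := by cases b <;> cases b' <;> simp
  · exact h
  · exact hT.2.2 u b h

lemma exists_isLeaf_or_isInfLeaf (hT : IsContextTree T) (s : L) :
    (∃ c, IsLeaf T c ∧ s ∈ cylRev c) ∨ IsInfLeaf T s := by
  classical
  by_cases hinf : IsInfLeaf T s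
  · exact .inr hinf
  have hex : ∃ n, ¬ T (List.ofFn fun i : Fin n => s i) := by
    simpa [IsInfLeaf] using hinf
  obtain ⟨m, hm⟩ : ∃ m, Nat.find hex = m + 1 :=
    Nat.exists_eq_succ_of_ne_zero fun h0 => Nat.find_spec hex (by simpa [h0] using hT.1)
  refine .inl ⟨_, ⟨not_not.mp (Nat.find_min hex (by omega : m < Nat.find hex)), fun b hb => ?_⟩,
    mem_cylRev_ofFn s m⟩
  have hnext : ¬ T ((List.ofFn fun i : Fin m => s i) ++ [s m]) := by
    have := Nat.find_spec hex
    rw [hm, List.ofFn_succ_last] at this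
    simpa using this
  exact hnext (hT.sibling hb _)

end IsContextTree

noncomputable def stepMeasure (q : Bool → ℝ≥0∞) (s : L) : Measure L :=
  q false • Measure.dirac (extend false s) + q true • Measure.dirac (extend true s)

lemma stepMeasure_cyl_append (q : Bool → ℝ≥0∞) (s : L) (w : List Bool) (b : Bool) :
    stepMeasure q s (cyl (w ++ [b])) = (cyl w).indicator (fun _ => q b) s := by
  have hB := measurableSet_cyl (w ++ [b])
  rw [stepMeasure, Measure.add_apply, Measure.smul_apply, Measure.smul_apply,
    Measure.dirac_apply' _ hB, Measure.dirac_apply' _ hB]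
  by_cases hs : s ∈ cyl w <;> cases b <;> simp [hs, extend_mem_cyl_append_iff]

namespace IsVLMCKernel

variable {T : List Bool → Prop} {qF : List Bool → Bool → ℝ≥0∞} {qI : L → Bool → ℝ≥0∞}
  {κ : Kernel L L}

lemma exists_eq_stepMeasure (hT : IsContextTree T) (hκ : IsVLMCKernel T qF qI κ) (s : L) :
    ∃ q, κ s = stepMeasure q s := by
  rcases hT.exists_isLeaf_or_isInfLeaf s with ⟨c, hc, hsc⟩ | hinf
  · exact ⟨qF c, hκ.1 c hc s hsc⟩
  · exact ⟨qI s, hκ.2 s hinf⟩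

lemma apply_cyl_append_of_isLeaf (hκ : IsVLMCKernel T qF qI κ) {c w : List Bool}
    (hc : IsLeaf T c) (hcw : c <+: w.reverse) {s : L} (hs : s ∈ cyl w) (b : Bool) :
    κ s (cyl (w ++ [b])) = qF c b := by
  rw [hκ.1 c hc s (cylRev_subset_of_prefix hcw hs)]
  exact (stepMeasure_cyl_append (qF c) s w b).trans (Set.indicator_of_mem hs _)

lemma apply_cyl_append_of_notMem (hT : IsContextTree T) (hκ : IsVLMCKernel T qF qI κ)
    {w : List Bool} {s : L} (hs : s ∉ cyl w) (b : Bool) : κ s (cyl (w ++ [b])) = 0 := by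
  obtain ⟨q, hq⟩ := hκ.exists_eq_stepMeasure hT s
  rw [hq, stepMeasure_cyl_append, Set.indicator_of_notMem hs]

end IsVLMCKernel

lemma IsStationary.measure_cyl_append {T : List Bool → Prop} {qF : List Bool → Bool → ℝ≥0∞}
    {qI : L → Bool → ℝ≥0∞} {κ : Kernel L L} {π : Measure L} (hT : IsContextTree T)
    (hκ : IsVLMCKernel T qF qI κ) (hπ : IsStationary κ π) (w : List Bool) (b : Bool) :
    π (cyl (w ++ [b])) = ∫⁻ s in cyl w, κ s (cyl (w ++ [b])) ∂π := by
  rw [hπ _ (measurableSet_cyl _), ← lintegral_indicator (measurableSet_cyl w)]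
  refine lintegral_congr fun s => ?_
  by_cases hs : s ∈ cyl w
  · rw [Set.indicator_of_mem hs]
  · rw [Set.indicator_of_notMem hs, hκ.apply_cyl_append_of_notMem hT hs]

/-- The two cases of `pref(w)`: a finite context `c` with `c̄` a suffix of `w`, where
`q_{pref(w)} = q_c`; or `w̄` an internal node, where `q_{w̄}(α)` is `π(wα)/π(w)`, read as `0`
when `π(w) = 0`. -/
theorem stationary_step_general
    (T : List Bool → Prop) (qF : List Bool → Bool → ℝ≥0∞) (qI : L → Bool → ℝ≥0∞)
    (hT : IsContextTree T)
    (κ : Kernel L L) (hκ : IsVLMCKernel T qF qI κ)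
    (π : Measure L) [IsProbabilityMeasure π] (hπ : IsStationary κ π)
    (w : List Bool) (b : Bool) :
    (∀ c, IsLeaf T c → c <+: w.reverse →
        π (cyl (w ++ [b])) = π (cyl w) * qF c b) ∧
    (T w.reverse → (∃ b', T (w.reverse ++ [b'])) →
        π (cyl (w ++ [b])) =
          π (cyl w) * (if π (cyl w) = 0 then 0
            else π (cyl (w ++ [b])) / π (cyl w))) := by
  refine ⟨fun c hc hcw => ?_, fun _ _ => ?_⟩
  · rw [hπ.measure_cyl_append hT hκ, setLIntegral_congr_fun (measurableSet_cyl w)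
      fun s hs => hκ.apply_cyl_append_of_isLeaf hc hcw hs b, setLIntegral_const, mul_comm]
  · split_ifs with h0
    · rw [mul_zero, hπ.measure_cyl_append hT hκ, Measure.restrict_eq_zero.mpr h0,
        lintegral_zero_measure]
    · rw [mul_comm, ENNReal.div_mul_cancel h0 (measure_ne_top π _)]

/-- For a SVLMC with stationary probability measure `π`,
for every finite word `w` and letter `α`, `π(wα) = π(w) q_{pref(w)}(α)`.
The two cases of the extended prefix function are spelled out: either the
reversed word `w̄` lies strictly above or at a finite context `c` (i.e. `c̄` is a
suffix of `w`), and then `q_{pref(w)} = q_c`; or `w̄` is an internal node of the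
tree, and then `q_{w̄}(α)` is `π(wα)/π(w)` if `π(w) ≠ 0`, and `0` otherwise. -/
theorem stationary_step
    (T : List Bool → Prop) (qF : List Bool → Bool → ℝ≥0∞) (qI : L → Bool → ℝ≥0∞)
    (hT : IsContextTree T)
    (hcount : Set.Countable {s : L | IsInfLeaf T s})
    (hqF : ∀ c, IsLeaf T c → qF c false + qF c true = 1)
    (hqI : ∀ s, IsInfLeaf T s → qI s false + qI s true = 1)
    (κ : Kernel L L) [IsMarkovKernel κ] (hκ : IsVLMCKernel T qF qI κ)
    (π : Measure L) [IsProbabilityMeasure π] (hπ : IsStationary κ π)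
    (w : List Bool) (b : Bool) :
    (∀ c, IsLeaf T c → c <+: w.reverse →
        π (cyl (w ++ [b])) = π (cyl w) * qF c b) ∧
    (T w.reverse → (∃ b', T (w.reverse ++ [b'])) →
        π (cyl (w ++ [b])) =
          π (cyl w) * (if π (cyl w) = 0 then 0
            else π (cyl (w ++ [b])) / π (cyl w))) :=
  stationary_step_general T qF qI hT κ hκ π hπ w b

end VLMC
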